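/- For all positive reals a ≠ b, the mean λ_{-1}(a,b) = (2 log((a+b)/2) - log a - log b) / (1/(2a) + 1/(2b) - 2/(a+b)) satisfies H(a,b) ≤ λ_{-1}(a,b) ≤ G(a,b), where H(a,b) = 2/(1/a+1/b) and G(a,b) = √(ab). -/

import Mathlib

/-!
Write `G = √(ab)` and `t = (a + b) / (2G) > 1` for the ratio of the arithmetic to the geometric
mean. Then `H = G / t` and `λ₋₁ = G · 2 log t / (t - t⁻¹)`, so the upper bound is
`2 log t ≤ t - t⁻¹`, i.e. `u ≤ sinh u` for `u = log t ≥ 0`, and the lower bound is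
`1 - (t²)⁻¹ ≤ log (t²)`.
-/

open Real

namespace Real

theorem two_mul_log_le_sub_inv {t : ℝ} (ht : 1 ≤ t) : 2 * log t ≤ t - t⁻¹ := by
  have := self_le_sinh_iff.mpr (log_nonneg ht)
  rw [sinh_log (by linarith)] at this
  linarith

theorem inv_le_two_mul_log_div_sub_inv {t : ℝ} (ht : 1 < t) :
    t⁻¹ ≤ 2 * log t / (t - t⁻¹) := by
  have hpos : 0 < t - t⁻¹ := sub_pos.mpr ((inv_lt_one_of_one_lt₀ ht).trans ht)
  rw [le_div_iff₀ hpos]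
  calc t⁻¹ * (t - t⁻¹) = 1 - (t ^ 2)⁻¹ := by field_simp
    _ ≤ log (t ^ 2) := one_sub_inv_le_log_of_pos (by positivity)
    _ = 2 * log t := by rw [log_pow]; push_cast; ring

theorem two_mul_log_div_sub_inv_le_one {t : ℝ} (ht : 1 < t) :
    2 * log t / (t - t⁻¹) ≤ 1 := by
  have hpos : 0 < t - t⁻¹ := sub_pos.mpr ((inv_lt_one_of_one_lt₀ ht).trans ht)
  exact (div_le_one hpos).mpr (two_mul_log_le_sub_inv ht.le)

end Real

noncomputable def amGmRatio (a b : ℝ) : ℝ := (a + b) / (2 * √(a * b))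

theorem one_lt_amGmRatio {a b : ℝ} (ha : 0 < a) (hb : 0 < b) (hab : a ≠ b) :
    1 < amGmRatio a b := by
  have hG : √(a * b) < (a + b) / 2 := by
    rw [sqrt_lt' (by linarith)]
    nlinarith [sq_pos_of_ne_zero (sub_ne_zero.mpr hab)]
  rw [amGmRatio, one_lt_div (by positivity)]
  linarith

theorem harmonic_mean_eq_sqrt_mul_inv_amGmRatio {a b : ℝ} (ha : 0 < a) (hb : 0 < b) :
    2 / (1 / a + 1 / b) = √(a * b) * (amGmRatio a b)⁻¹ := by
  have hG : 0 < √(a * b) := sqrt_pos.mpr (by positivity)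
  have hG2 : √(a * b) ^ 2 = a * b := sq_sqrt (by positivity)
  rw [amGmRatio]
  field_simp
  rw [hG2]
  ring

theorem lambdaNegOne_eq_sqrt_mul {a b : ℝ} (ha : 0 < a) (hb : 0 < b) :
    (2 * log ((a + b) / 2) - log a - log b) / (1 / (2 * a) + 1 / (2 * b) - 2 / (a + b)) =
      √(a * b) * (2 * log (amGmRatio a b) / (amGmRatio a b - (amGmRatio a b)⁻¹)) := by
  have hG : 0 < √(a * b) := sqrt_pos.mpr (by positivity)
  have hG2 : √(a * b) ^ 2 = a * b := sq_sqrt (by positivity)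
  have hnum : 2 * log ((a + b) / 2) - log a - log b = 2 * log (amGmRatio a b) := by
    rw [amGmRatio, ← div_div, log_div (by positivity) hG.ne', log_sqrt (by positivity),
      log_mul ha.ne' hb.ne']
    ring
  have hden : 1 / (2 * a) + 1 / (2 * b) - 2 / (a + b) =
      (amGmRatio a b - (amGmRatio a b)⁻¹) / √(a * b) := by
    rw [amGmRatio]
    field_simp
    rw [hG2]
    ring
  rw [hnum, hden]
  field_simp

theorem stmt8 (a b : ℝ) (ha : 0 < a) (hb : 0 < b) (hab : a ≠ b) :
    2 / (1 / a + 1 / b) ≤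
      (2 * Real.log ((a + b) / 2) - Real.log a - Real.log b) /
        (1 / (2 * a) + 1 / (2 * b) - 2 / (a + b)) ∧
    (2 * Real.log ((a + b) / 2) - Real.log a - Real.log b) /
        (1 / (2 * a) + 1 / (2 * b) - 2 / (a + b)) ≤ Real.sqrt (a * b) := by
  have ht := one_lt_amGmRatio ha hb hab
  rw [lambdaNegOne_eq_sqrt_mul ha hb, harmonic_mean_eq_sqrt_mul_inv_amGmRatio ha hb]
  exact ⟨mul_le_mul_of_nonneg_left (inv_le_two_mul_log_div_sub_inv ht) (sqrt_nonneg _),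
    mul_le_of_le_one_right (sqrt_nonneg _) (two_mul_log_div_sub_inv_le_one ht)⟩
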